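/- arXiv:2311.07794 — 2 statements merged into one kernel-verified Lean document; each statement's English description precedes it below -/
import Mathlib

section
/- Let Z be a nonempty finite set and let 0 < ε < 1. Let d_A, d_B be positive integers. For each z ∈ Z, let ψ_z : Fin d_A × Fin d_B → ℂ be a unit vector, and let P_z and Q_z be Hermitian complex matrices of sizes d_A and d_B respectively, satisfying 0 ≤ P_z ≤ I and 0 ≤ Q_z ≤ I in the Loewner order. If (1/|Z|) · Σ_{z∈Z} Re( ψ_z† (((I + P_z)/2) ⊗ ((I + Q_z)/2)) ψ_z ) ≥ 1/2 + ε, then (1/|Z|) · Σ_{z∈Z} Re( ψ_z† (P_z ⊗ Q_z) ψ_z ) ≥ ε³. -/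
open Matrix Kronecker Finset
open scoped ComplexOrder

private lemma sub_kron {l m : Type*} (A B : Matrix l l ℂ) (C : Matrix m m ℂ) :
    (A - B) ⊗ₖ C = A ⊗ₖ C - B ⊗ₖ C := by
  ext ⟨i, j⟩ ⟨k, p⟩
  simp [Matrix.kroneckerMap_apply, sub_mul]

private lemma kron_sub {l m : Type*} (A : Matrix l l ℂ) (B C : Matrix m m ℂ) :
    A ⊗ₖ (B - C) = A ⊗ₖ B - A ⊗ₖ C := by
  ext ⟨i, j⟩ ⟨k, p⟩
  simp [Matrix.kroneckerMap_apply, mul_sub]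

private lemma kron_conjTranspose {l m : Type*} (A : Matrix l l ℂ) (B : Matrix m m ℂ) :
    (A ⊗ₖ B)ᴴ = Aᴴ ⊗ₖ Bᴴ := by
  ext ⟨i, j⟩ ⟨k, p⟩
  simp [Matrix.kroneckerMap_apply, Matrix.conjTranspose_apply, mul_comm]

private lemma posSemidef_kron {l m : Type*} [Fintype l] [Fintype m] [DecidableEq l]
    [DecidableEq m] {A : Matrix l l ℂ} {B : Matrix m m ℂ}
    (hA : A.PosSemidef) (hB : B.PosSemidef) : (A ⊗ₖ B).PosSemidef := by
  open scoped MatrixOrder in obtain ⟨A', rfl⟩ := CStarAlgebra.nonneg_iff_eq_star_mul_self.mp hA.nonneg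
  open scoped MatrixOrder in obtain ⟨B', rfl⟩ := CStarAlgebra.nonneg_iff_eq_star_mul_self.mp hB.nonneg
  rw [Matrix.star_eq_conjTranspose, Matrix.star_eq_conjTranspose, Matrix.mul_kronecker_mul, ← kron_conjTranspose]
  exact Matrix.posSemidef_conjTranspose_mul_self _

/-- Averaging lemma (Lemma `simult` in the paper): if the average of the
quadratic forms of `((I+P)/2) ⊗ ((I+Q)/2)` on unit vectors `ψ_z` is at least
`1/2 + ε`, then the average of the quadratic forms of `P ⊗ Q` is at least `ε³`. -/
theorem stmt_0 {Z : Type} [Fintype Z] [Nonempty Z]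
    (ε : ℝ) (hε0 : 0 < ε) (hε1 : ε < 1)
    (dA dB : ℕ) (hdA : 0 < dA) (hdB : 0 < dB)
    (ψ : Z → (Fin dA × Fin dB → ℂ))
    (hψ : ∀ z, ∑ i, ‖ψ z i‖ ^ 2 = 1)
    (P : Z → Matrix (Fin dA) (Fin dA) ℂ)
    (Q : Z → Matrix (Fin dB) (Fin dB) ℂ)
    (hPherm : ∀ z, (P z).IsHermitian) (hQherm : ∀ z, (Q z).IsHermitian)
    (hP0 : ∀ z, (P z).PosSemidef) (hP1 : ∀ z, ((1 : Matrix (Fin dA) (Fin dA) ℂ) - P z).PosSemidef)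
    (hQ0 : ∀ z, (Q z).PosSemidef) (hQ1 : ∀ z, ((1 : Matrix (Fin dB) (Fin dB) ℂ) - Q z).PosSemidef)
    (h : (1 / (Fintype.card Z : ℝ)) *
        ∑ z, (star (ψ z) ⬝ᵥ ((((1/2 : ℂ) • (1 + P z)) ⊗ₖ ((1/2 : ℂ) • (1 + Q z))) *ᵥ ψ z)).re
        ≥ 1/2 + ε) :
    (1 / (Fintype.card Z : ℝ)) *
        ∑ z, (star (ψ z) ⬝ᵥ ((P z ⊗ₖ Q z) *ᵥ ψ z)).re ≥ ε ^ 3 := by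
  have key : ∀ z, (star (ψ z) ⬝ᵥ ((((1/2 : ℂ) • (1 + P z)) ⊗ₖ ((1/2 : ℂ) • (1 + Q z))) *ᵥ ψ z)).re
      ≤ 1/2 + (star (ψ z) ⬝ᵥ ((P z ⊗ₖ Q z) *ᵥ ψ z)).re / 2 := by
    intro z
    have hmat : (((1/2 : ℂ) • (1 + P z)) ⊗ₖ ((1/2 : ℂ) • (1 + Q z)))
        = (1/2 : ℂ) • ((1 : Matrix (Fin dA × Fin dB) (Fin dA × Fin dB) ℂ) + P z ⊗ₖ Q z)
          - (1/4 : ℂ) • (((1 : Matrix (Fin dA) (Fin dA) ℂ) - P z)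
              ⊗ₖ ((1 : Matrix (Fin dB) (Fin dB) ℂ) - Q z)) := by
      simp only [Matrix.smul_kronecker, Matrix.kronecker_smul, Matrix.add_kronecker,
        Matrix.kronecker_add, sub_kron, kron_sub, Matrix.one_kronecker_one, smul_smul]
      module
    have hpos : 0 ≤ (star (ψ z) ⬝ᵥ ((((1 : Matrix (Fin dA) (Fin dA) ℂ) - P z)
        ⊗ₖ ((1 : Matrix (Fin dB) (Fin dB) ℂ) - Q z)) *ᵥ ψ z)).re :=
      (posSemidef_kron (hP1 z) (hQ1 z)).re_dotProduct_nonneg _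
    have hone : (star (ψ z) ⬝ᵥ ψ z).re = 1 := by
      rw [← hψ z, dotProduct, Complex.re_sum]
      refine Finset.sum_congr rfl fun i _ => ?_
      simp [Complex.star_def, Complex.mul_re, Complex.sq_norm, Complex.normSq_apply]
    rw [hmat, Matrix.sub_mulVec, Matrix.smul_mulVec, Matrix.smul_mulVec,
      dotProduct_sub, dotProduct_smul, dotProduct_smul, Matrix.add_mulVec,
      Matrix.one_mulVec, dotProduct_add]
    simp only [Complex.sub_re, Complex.add_re, smul_eq_mul, Complex.mul_re]
    norm_num
    linarith [hone, hpos]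
  -- now combine
  set c : ℝ := (Fintype.card Z : ℝ) with hc
  have hcpos : 0 < c := by positivity
  have hsum : ∑ z, (star (ψ z) ⬝ᵥ ((((1/2 : ℂ) • (1 + P z)) ⊗ₖ ((1/2 : ℂ) • (1 + Q z))) *ᵥ ψ z)).re
      ≤ ∑ z, (1/2 + (star (ψ z) ⬝ᵥ ((P z ⊗ₖ Q z) *ᵥ ψ z)).re / 2) :=
    Finset.sum_le_sum fun z _ => key z
  rw [Finset.sum_add_distrib, Finset.sum_const, Finset.card_univ, nsmul_eq_mul,
    ← Finset.sum_div] at hsum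
  rw [ge_iff_le, one_div_mul_eq_div, le_div_iff₀ hcpos] at h ⊢
  have hcube : ε ^ 3 ≤ 2 * ε := by nlinarith [sq_nonneg ε, mul_pos hε0 hε0, hε0.le, hε1.le]
  nlinarith [h, hsum, hcpos, mul_le_mul_of_nonneg_right hcube hcpos.le]
end

section
/- Let Z be a nonempty finite set and let 0 < ε < 1. Let a, b : Z → ℝ be functions with 0 ≤ a(z) ≤ 1 and 0 ≤ b(z) ≤ 1 for all z ∈ Z. If (1/|Z|) · Σ_{z∈Z} ((1 + a(z))/2) · ((1 + b(z))/2) ≥ 1/2 + ε, then the fraction of z ∈ Z for which both a(z) ≥ ε and b(z) ≥ ε holds is at least ε; that is, |{z ∈ Z : a(z) ≥ ε and b(z) ≥ ε}| ≥ ε · |Z|. -/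
open Finset

/-- Scalar averaging core of Lemma `simult`: if the average of
`((1+a)/2)·((1+b)/2)` over a finite set is at least `1/2 + ε`, then the
fraction of points where both `a ≥ ε` and `b ≥ ε` is at least `ε`. -/
theorem stmt_1 {Z : Type} [Fintype Z] [Nonempty Z]
    (ε : ℝ) (hε0 : 0 < ε) (hε1 : ε < 1)
    (a b : Z → ℝ)
    (ha : ∀ z, 0 ≤ a z ∧ a z ≤ 1) (hb : ∀ z, 0 ≤ b z ∧ b z ≤ 1)
    (h : (1 / (Fintype.card Z : ℝ)) *
        ∑ z, ((1 + a z) / 2) * ((1 + b z) / 2) ≥ 1/2 + ε) :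
    ε * (Fintype.card Z : ℝ) ≤
      ((Finset.univ.filter fun z : Z => ε ≤ a z ∧ ε ≤ b z).card : ℝ) := by
  classical
  set p : Z → Prop := fun z => ε ≤ a z ∧ ε ≤ b z with hp
  set f : Z → ℝ := fun z => ((1 + a z) / 2) * ((1 + b z) / 2) with hf
  have hN : (0 : ℝ) < (Fintype.card Z : ℝ) := by
    exact_mod_cast Fintype.card_pos
  have hsum : (1/2 + ε) * (Fintype.card Z : ℝ) ≤ ∑ z, f z := by
    rw [ge_iff_le, mul_comm, mul_one_div, le_div_iff₀ hN] at h
    exact h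
  have hcard : ((univ.filter p).card : ℝ) + ((univ.filter fun z => ¬ p z).card : ℝ)
      = (Fintype.card Z : ℝ) := by
    have := Finset.card_filter_add_card_filter_not (s := (univ : Finset Z)) p
    exact_mod_cast this
  have h1 : ∑ z ∈ univ.filter p, f z ≤ ((univ.filter p).card : ℝ) * 1 := by
    have := Finset.sum_le_card_nsmul (univ.filter p) f 1 ?_
    · simpa [nsmul_eq_mul] using this
    intro z _
    have := ha z; have := hb z
    have h1 : (1 + a z) / 2 ≤ 1 := by linarith [(ha z).2]
    have h2 : (1 + b z) / 2 ≤ 1 := by linarith [(hb z).2]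
    simp only [hf]
    nlinarith [(ha z).1, (hb z).1]
  have h2 : ∑ z ∈ univ.filter (fun z => ¬ p z), f z
      ≤ ((univ.filter fun z => ¬ p z).card : ℝ) * ((1 + ε)/2) := by
    have := Finset.sum_le_card_nsmul (univ.filter fun z => ¬ p z) f ((1+ε)/2) ?_
    · simpa [nsmul_eq_mul] using this
    intro z hz
    simp only [Finset.mem_filter, hp, not_and_or, not_le] at hz
    have ha1 := ha z; have hb1 := hb z
    rcases hz.2 with h' | h'
    · have hA : (1 + a z)/2 ≤ (1 + ε)/2 := by linarith
      have hB : (1 + b z)/2 ≤ 1 := by linarith [hb1.2]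
      simp only [hf]
      nlinarith [ha1.1, hb1.1]
    · have hB : (1 + b z)/2 ≤ (1 + ε)/2 := by linarith
      have hA : (1 + a z)/2 ≤ 1 := by linarith [ha1.2]
      simp only [hf]
      nlinarith [ha1.1, hb1.1]
  have hsplit : ∑ z ∈ univ.filter p, f z + ∑ z ∈ univ.filter (fun z => ¬ p z), f z
      = ∑ z, f z := Finset.sum_filter_add_sum_filter_not _ _ _
  have hg0 : (0 : ℝ) ≤ ((univ.filter p).card : ℝ) := by positivity
  nlinarith [hsum, h1, h2, hsplit, hcard, hg0, hε0.le, hε1]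
end
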